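/- Let A be a locally finite hyperplane arrangement in ℝⁿ and x₀ a generic point. For each chamber C, let F_C be the smallest face of C containing the projection proj_C(x₀). Then the number of chambers C with codim(F_C) = 0 is exactly 1 (namely the chamber containing x₀), and the number of chambers C with codim(F_C) = 1 equals the number of hyperplanes of A. -/

import Mathlib

/-!
Since `x₀` lies on no hyperplane, a nearest point `p` of a chamber `C` can be pushed towards `x₀`
inside `C` along every direction allowed by the hyperplanes through `p`, so first-order optimality
constrains `p`. If `p` is on no hyperplane, this forces `p = x₀`, so `C` is the chamber of `x₀`.
If `p` is on `H_i` alone, moving within `H_i` forces `p` to be the foot `q_i` of the perpendicular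
from `x₀`, and moving towards `x₀` forces `C` to lie on the far side of `H_i`. Genericity puts
`q_i` on no other hyperplane, so exactly one chamber contains `q_i` on that side; conversely,
`q_i` is the nearest point of the whole far half-space, hence of that chamber.
-/
open Metric Set MeasureTheory

noncomputable section

/-- A locally finite arrangement of affine hyperplanes in ℝⁿ, given by affine
equations `⟪a i, x⟫ = b i` with `a i ≠ 0`, indexed injectively by `ι`. -/
structure Arrangement (n : ℕ) (ι : Type) where
  a : ι → EuclideanSpace ℝ (Fin n)
  b : ι → ℝ
  ha : ∀ i, a i ≠ 0
  inj : Function.Injective fun i => {x : EuclideanSpace ℝ (Fin n) | (inner ℝ (a i) x : ℝ) = b i}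
  locFin : ∀ x : EuclideanSpace ℝ (Fin n), ∃ ε > 0,
    {i : ι | ∃ y ∈ Metric.ball x ε, (inner ℝ (a i) y : ℝ) = b i}.Finite

namespace Arrangement

variable {n : ℕ} {ι : Type} (A : Arrangement n ι)

/-- The defining affine functional of the `i`-th hyperplane. -/
def val (i : ι) (x : EuclideanSpace ℝ (Fin n)) : ℝ := (inner ℝ (A.a i) x : ℝ) - A.b i

/-- The `i`-th hyperplane. -/
def hyperplane (i : ι) : Set (EuclideanSpace ℝ (Fin n)) := {x | A.val i x = 0}

/-- The sign vector of a point. -/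
def signAt (x : EuclideanSpace ℝ (Fin n)) : ι → SignType := fun i => SignType.sign (A.val i x)

/-- The (relatively open) stratum with sign vector `σ`. -/
def openCell (σ : ι → SignType) : Set (EuclideanSpace ℝ (Fin n)) :=
  {x | ∀ i, SignType.sign (A.val i x) = σ i}

/-- The (closed) faces of the arrangement: closures of the strata. -/
def IsFace (F : Set (EuclideanSpace ℝ (Fin n))) : Prop :=
  ∃ x : EuclideanSpace ℝ (Fin n), F = closure (A.openCell (A.signAt x))

/-- Chambers: closed faces of codimension 0. -/
def IsChamber (C : Set (EuclideanSpace ℝ (Fin n))) : Prop :=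
  ∃ x : EuclideanSpace ℝ (Fin n), (∀ i, A.val i x ≠ 0) ∧
    C = closure (A.openCell (A.signAt x))

/-- The support of a subset: the hyperplanes containing it. -/
def supp (U : Set (EuclideanSpace ℝ (Fin n))) : Set ι := {i | U ⊆ A.hyperplane i}

/-- The set of hyperplanes separating two chambers. -/
def sep (C C' : Set (EuclideanSpace ℝ (Fin n))) : Set ι :=
  {i | ∀ x ∈ interior C, ∀ y ∈ interior C', A.val i x * A.val i y < 0}

/-- `F` is a face of the chamber (or face) `C`. -/
def IsFaceOf (F C : Set (EuclideanSpace ℝ (Fin n))) : Prop := A.IsFace F ∧ F ⊆ C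

/-- `A.IsCF C F D` means `D = C.F`: `D` is the unique chamber containing `F` and not
separated from `C` by any hyperplane of `supp F`. -/
def IsCF (C F D : Set (EuclideanSpace ℝ (Fin n))) : Prop :=
  A.IsChamber D ∧ F ⊆ D ∧ A.sep C D ∩ A.supp F = ∅

/-- `A.IsOpp D F E` means `E = D^F`: `E` is the chamber opposite to `D` with respect to
its face `F`, i.e. the hyperplanes separating `D` and `E` are exactly those containing `F`. -/
def IsOpp (D F E : Set (EuclideanSpace ℝ (Fin n))) : Prop :=
  A.IsChamber E ∧ F ⊆ E ∧ A.sep D E = A.supp F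

/-- Flats: nonempty intersections of subfamilies of hyperplanes (including ℝⁿ itself). -/
def IsFlat (X : Set (EuclideanSpace ℝ (Fin n))) : Prop :=
  X.Nonempty ∧ ∃ s : Set ι, X = ⋂ i ∈ s, A.hyperplane i

/-- A cell `⟨C, F⟩` of the Salvetti complex: a chamber `C` together with a face `F` of `C`. -/
structure Cell {n : ℕ} {ι : Type} (𝒜 : Arrangement n ι) where
  C : Set (EuclideanSpace ℝ (Fin n))
  F : Set (EuclideanSpace ℝ (Fin n))
  isChamber : 𝒜.IsChamber C
  isFace : 𝒜.IsFace F
  faceLe : F ⊆ C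

/-- The Salvetti order: `⟨C,F⟩ ≤ ⟨D,G⟩` iff `F ⪯ G` (i.e. `F ⊇ G`) and `D.F = C`. -/
def cellLE (c d : A.Cell) : Prop := d.F ⊆ c.F ∧ A.IsCF d.C c.F c.C

/-- The subcomplex `S(C)`: cells `⟨D,F⟩` with `D = C.F`. -/
def inS (C : Set (EuclideanSpace ℝ (Fin n))) (c : A.Cell) : Prop := A.IsCF C c.F c.C

/-- A strict total order on the chambers. -/
def IsChamberOrder (lt : Set (EuclideanSpace ℝ (Fin n)) → Set (EuclideanSpace ℝ (Fin n)) → Prop) :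
    Prop :=
  (∀ C C', A.IsChamber C → A.IsChamber C' → C ≠ C' → lt C C' ∨ lt C' C) ∧
  (∀ C, ¬ lt C C) ∧
  (∀ C C' C'', lt C C' → lt C' C'' → lt C C'')

/-- The upper ideal `J(C)` of the poset of flats determined by a total order on chambers. -/
def J (lt : Set (EuclideanSpace ℝ (Fin n)) → Set (EuclideanSpace ℝ (Fin n)) → Prop)
    (C : Set (EuclideanSpace ℝ (Fin n))) : Set (Set (EuclideanSpace ℝ (Fin n))) :=
  {X | A.IsFlat X ∧ ∀ C', A.IsChamber C' → lt C' C → (A.supp X ∩ A.sep C C').Nonempty}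

/-- A valid order: for each chamber `C`, the ideal `J(C)` is the principal upper ideal
(in the poset of flats ordered by reverse inclusion) generated by `X_C = |F_C|` for some
face `F_C` of `C`. -/
def IsValidOrder
    (lt : Set (EuclideanSpace ℝ (Fin n)) → Set (EuclideanSpace ℝ (Fin n)) → Prop) : Prop :=
  A.IsChamberOrder lt ∧
  ∀ C, A.IsChamber C → ∃ F_C, A.IsFaceOf F_C C ∧
    A.J lt C = {X | A.IsFlat X ∧ X ⊆ (affineSpan ℝ F_C : Set (EuclideanSpace ℝ (Fin n)))}

/-- Membership in `N(C)`: cells of `S(C)` not lying in any earlier `S(C')`. -/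
def inN (lt : Set (EuclideanSpace ℝ (Fin n)) → Set (EuclideanSpace ℝ (Fin n)) → Prop)
    (C : Set (EuclideanSpace ℝ (Fin n))) (c : A.Cell) : Prop :=
  A.inS C c ∧ ∀ C', A.IsChamber C' → lt C' C → ¬ A.inS C' c

/-- A point `x₀` is generic with respect to `A`: (i) chambers at equal distance from `x₀`
have the same metric projection of `x₀`, lying in their intersection; (ii) distances to
strictly comparable flats are strictly comparable. -/
def IsGeneric (x₀ : EuclideanSpace ℝ (Fin n)) : Prop :=
  (∀ C C', A.IsChamber C → A.IsChamber C' → infDist x₀ C = infDist x₀ C' →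
    ∀ p ∈ C, ∀ p' ∈ C', (∀ q ∈ C, dist x₀ p ≤ dist x₀ q) →
      (∀ q ∈ C', dist x₀ p' ≤ dist x₀ q) → p = p' ∧ p ∈ C ∩ C') ∧
  (∀ L L', A.IsFlat L → A.IsFlat L' → L' ⊂ L → infDist x₀ L < infDist x₀ L')

end Arrangement

open Filter Topology InnerProductSpace

theorem sign_eq_sign_of_mul_pos {a b : ℝ} (h : 0 < a * b) : SignType.sign a = SignType.sign b := by
  rcases mul_pos_iff.1 h with ⟨ha, hb⟩ | ⟨ha, hb⟩
  · rw [sign_pos ha, sign_pos hb]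
  · rw [sign_neg ha, sign_neg hb]

theorem mul_nonneg_of_sign_eq {a b : ℝ} (h : SignType.sign a = SignType.sign b) : 0 ≤ a * b := by
  rcases lt_trichotomy a 0 with ha | rfl | ha
  · rw [sign_neg ha, eq_comm, sign_eq_neg_one_iff] at h
    exact (mul_pos_of_neg_of_neg ha h).le
  · rw [zero_mul]
  · rw [sign_pos ha, eq_comm, sign_eq_one_iff] at h
    exact (mul_pos ha h).le

theorem inner_sub_nonpos_of_isMinOn_dist {E : Type*} [NormedAddCommGroup E]
    [InnerProductSpace ℝ E] {K : Set E} {x p v : E} (hmin : IsMinOn (dist x) K p)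
    (hv : ∀ᶠ t in 𝓝[>] (0 : ℝ), p + t • v ∈ K) : ⟪x - p, v⟫_ℝ ≤ 0 := by
  have hbound : ∀ᶠ t in 𝓝[>] (0 : ℝ), ⟪x - p, v⟫_ℝ ≤ t * ‖v‖ ^ 2 / 2 := by
    filter_upwards [hv, self_mem_nhdsWithin] with t hmem (ht : 0 < t)
    have h := isMinOn_iff.1 hmin _ hmem
    rw [dist_eq_norm, dist_eq_norm, show x - (p + t • v) = (x - p) - t • v by abel] at h
    have hsq := pow_le_pow_left₀ (norm_nonneg _) h 2
    rw [norm_sub_sq_real (x - p), real_inner_smul_right, norm_smul,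
      Real.norm_of_nonneg ht.le] at hsq
    nlinarith
  have hlim : Tendsto (fun t : ℝ => t * ‖v‖ ^ 2 / 2) (𝓝[>] 0) (𝓝 0) := by
    have h : Continuous fun t : ℝ => t * ‖v‖ ^ 2 / 2 := by fun_prop
    simpa using (h.tendsto 0).mono_left nhdsWithin_le_nhds
  exact ge_of_tendsto hlim hbound

namespace Arrangement

variable {n : ℕ} {ι : Type} (A : Arrangement n ι)

theorem continuous_val (i : ι) : Continuous (A.val i) := by
  unfold val
  fun_prop

theorem val_add_smul (i : ι) (x v : EuclideanSpace ℝ (Fin n)) (t : ℝ) :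
    A.val i (x + t • v) = A.val i x + t * ⟪A.a i, v⟫_ℝ := by
  simp only [val, inner_add_right, real_inner_smul_right]
  ring

theorem inner_sub_eq_val_sub (i : ι) (x y : EuclideanSpace ℝ (Fin n)) :
    ⟪A.a i, x - y⟫_ℝ = A.val i x - A.val i y := by
  simp only [val, inner_sub_right]
  ring

/-- The finitely many hyperplanes meeting a small ball around `x` are handled by continuity,
the others by connectedness of the ball. -/
theorem eventually_sign_val_eq (x : EuclideanSpace ℝ (Fin n)) :
    ∀ᶠ y in 𝓝 x, ∀ i, A.val i x ≠ 0 → SignType.sign (A.val i y) = SignType.sign (A.val i x) := by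
  obtain ⟨ε, hε, hfin⟩ := A.locFin x
  set S := {i : ι | ∃ y ∈ ball x ε, ⟪A.a i, y⟫_ℝ = A.b i}
  have hnear : ∀ᶠ y in 𝓝 x, ∀ i ∈ S, A.val i x ≠ 0 → 0 < A.val i x * A.val i y := by
    refine (eventually_all_finite hfin).2 fun i _ => ?_
    by_cases hi : A.val i x = 0
    · exact Eventually.of_forall fun _ h => absurd hi h
    · have hcont : ContinuousAt (fun y => A.val i x * A.val i y) x :=
        (continuous_const.mul (A.continuous_val i)).continuousAt
      exact (continuousAt_const.eventually_lt hcont (mul_self_pos.2 hi)).mono fun _ h _ => h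
  have hfar : ∀ i ∉ S, ∀ y ∈ ball x ε, 0 < A.val i x * A.val i y := by
    intro i hi y hy
    by_contra! hle
    have hIVT {a b} (ha : a ∈ ball x ε) (hb : b ∈ ball x ε) :=
      isPreconnected_ball.intermediate_value ha hb (A.continuous_val i).continuousOn
    obtain ⟨z, hz, hz0⟩ : ∃ z ∈ ball x ε, A.val i z = 0 := by
      rcases mul_nonpos_iff.1 hle with ⟨hx, hy'⟩ | ⟨hx, hy'⟩
      · exact hIVT hy (mem_ball_self hε) ⟨hy', hx⟩
      · exact hIVT (mem_ball_self hε) hy ⟨hx, hy'⟩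
    exact hi ⟨z, hz, sub_eq_zero.1 hz0⟩
  filter_upwards [hnear, ball_mem_nhds x hε] with y hyS hyε i hi
  refine (sign_eq_sign_of_mul_pos ?_).symm
  by_cases hiS : i ∈ S
  · exact hyS i hiS hi
  · exact hfar i hiS y hyε

theorem mul_nonneg_of_mem_closure_openCell {y z : EuclideanSpace ℝ (Fin n)}
    (hz : z ∈ closure (A.openCell (A.signAt y))) (i : ι) : 0 ≤ A.val i y * A.val i z := by
  have hclosed : IsClosed {z | 0 ≤ A.val i y * A.val i z} :=
    isClosed_le continuous_const (continuous_const.mul (A.continuous_val i))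
  exact closure_minimal (fun w hw => mul_nonneg_of_sign_eq (hw i).symm) hclosed hz

theorem mem_closure_openCell_of_mul_nonneg {y z : EuclideanSpace ℝ (Fin n)}
    (hy : ∀ i, A.val i y ≠ 0) (hz : ∀ i, 0 ≤ A.val i y * A.val i z) :
    z ∈ closure (A.openCell (A.signAt y)) := by
  have hseg : ∀ t ∈ Ioo (0 : ℝ) 1, y + t • (z - y) ∈ A.openCell (A.signAt y) := by
    intro t ⟨ht0, ht1⟩ i
    refine sign_eq_sign_of_mul_pos ?_
    rw [A.val_add_smul, A.inner_sub_eq_val_sub]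
    nlinarith [mul_self_pos.2 (hy i), hz i]
  have hlim : Tendsto (fun t : ℝ => y + t • (z - y)) (𝓝[<] 1) (𝓝 z) := by
    have h : Continuous fun t : ℝ => y + t • (z - y) := by fun_prop
    simpa using (h.tendsto 1).mono_left nhdsWithin_le_nhds
  exact mem_closure_of_tendsto hlim (mem_of_superset (Ioo_mem_nhdsLT zero_lt_one) hseg)

theorem sign_val_eq_of_mem_closure_openCell {y z : EuclideanSpace ℝ (Fin n)} {i : ι}
    (hy : A.val i y ≠ 0) (hz : z ∈ closure (A.openCell (A.signAt y))) (hzi : A.val i z ≠ 0) :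
    SignType.sign (A.val i y) = SignType.sign (A.val i z) :=
  sign_eq_sign_of_mul_pos
    ((A.mul_nonneg_of_mem_closure_openCell hz i).lt_of_ne (mul_ne_zero hy hzi).symm)

theorem signAt_eq_of_mem_closure_openCell {y y' z : EuclideanSpace ℝ (Fin n)}
    (hy : ∀ i, A.val i y ≠ 0) (hy' : ∀ i, A.val i y' ≠ 0)
    (hz : z ∈ closure (A.openCell (A.signAt y))) (hz' : z ∈ closure (A.openCell (A.signAt y')))
    (h : ∀ i, A.val i z = 0 → SignType.sign (A.val i y) = SignType.sign (A.val i y')) :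
    A.signAt y = A.signAt y' := by
  funext i
  by_cases hzi : A.val i z = 0
  · exact h i hzi
  · exact (A.sign_val_eq_of_mem_closure_openCell (hy i) hz hzi).trans
      (A.sign_val_eq_of_mem_closure_openCell (hy' i) hz' hzi).symm

theorem eventually_add_smul_mem_closure_openCell {y p v : EuclideanSpace ℝ (Fin n)}
    (hy : ∀ i, A.val i y ≠ 0) (hp : p ∈ closure (A.openCell (A.signAt y)))
    (hv : ∀ i, A.val i p = 0 → 0 ≤ A.val i y * ⟪A.a i, v⟫_ℝ) :
    ∀ᶠ t in 𝓝[>] (0 : ℝ), p + t • v ∈ closure (A.openCell (A.signAt y)) := by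
  have hlim : Tendsto (fun t : ℝ => p + t • v) (𝓝[>] 0) (𝓝 p) := by
    have h : Continuous fun t : ℝ => p + t • v := by fun_prop
    simpa using (h.tendsto 0).mono_left nhdsWithin_le_nhds
  filter_upwards [hlim.eventually (A.eventually_sign_val_eq p), self_mem_nhdsWithin]
    with t hsign (ht : 0 < t)
  refine A.mem_closure_openCell_of_mul_nonneg hy fun i => ?_
  by_cases hpi : A.val i p = 0
  · rw [A.val_add_smul, hpi, zero_add, mul_left_comm]
    exact mul_nonneg ht.le (hv i hpi)
  · exact mul_nonneg_of_sign_eq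
      ((A.sign_val_eq_of_mem_closure_openCell (hy i) hp hpi).trans (hsign i hpi).symm)

theorem inner_sub_nonpos_of_isMinOn_dist_chamber {x y p v : EuclideanSpace ℝ (Fin n)}
    (hy : ∀ i, A.val i y ≠ 0) (hp : p ∈ closure (A.openCell (A.signAt y)))
    (hmin : IsMinOn (dist x) (closure (A.openCell (A.signAt y))) p)
    (hv : ∀ i, A.val i p = 0 → 0 ≤ A.val i y * ⟪A.a i, v⟫_ℝ) : ⟪x - p, v⟫_ℝ ≤ 0 :=
  _root_.inner_sub_nonpos_of_isMinOn_dist hmin (A.eventually_add_smul_mem_closure_openCell hy hp hv)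

theorem eq_of_isMinOn_dist_of_forall_val_ne_zero {x y p : EuclideanSpace ℝ (Fin n)}
    (hy : ∀ i, A.val i y ≠ 0) (hp : p ∈ closure (A.openCell (A.signAt y)))
    (hmin : IsMinOn (dist x) (closure (A.openCell (A.signAt y))) p)
    (hoff : ∀ i, A.val i p ≠ 0) : p = x := by
  have h := A.inner_sub_nonpos_of_isMinOn_dist_chamber (v := x - p) hy hp hmin
    fun i hi => absurd hi (hoff i)
  exact (sub_eq_zero.1 (real_inner_self_nonpos.1 h)).symm

def hyperplaneProj (i : ι) (x : EuclideanSpace ℝ (Fin n)) : EuclideanSpace ℝ (Fin n) :=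
  x - (A.val i x / ‖A.a i‖ ^ 2) • A.a i

theorem norm_a_sq_pos (i : ι) : 0 < ‖A.a i‖ ^ 2 :=
  pow_pos (norm_pos_iff.2 (A.ha i)) 2

theorem val_hyperplaneProj (i : ι) (x : EuclideanSpace ℝ (Fin n)) :
    A.val i (A.hyperplaneProj i x) = 0 := by
  rw [hyperplaneProj, sub_eq_add_neg, ← neg_smul, A.val_add_smul, real_inner_self_eq_norm_sq,
    neg_mul, div_mul_cancel₀ _ (A.norm_a_sq_pos i).ne', add_neg_cancel]

theorem inner_sub_hyperplaneProj (i : ι) (x z : EuclideanSpace ℝ (Fin n)) :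
    ⟪x - A.hyperplaneProj i x, z - A.hyperplaneProj i x⟫_ℝ =
      A.val i x * A.val i z / ‖A.a i‖ ^ 2 := by
  rw [hyperplaneProj, sub_sub_cancel, real_inner_smul_left, ← hyperplaneProj,
    A.inner_sub_eq_val_sub, A.val_hyperplaneProj, sub_zero]
  ring

theorem dist_hyperplaneProj_sq_add_le {i : ι} {x z : EuclideanSpace ℝ (Fin n)}
    (hz : A.val i x * A.val i z ≤ 0) :
    dist x (A.hyperplaneProj i x) ^ 2 + dist z (A.hyperplaneProj i x) ^ 2 ≤ dist x z ^ 2 := by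
  set q := A.hyperplaneProj i x
  have hinner : ⟪x - q, z - q⟫_ℝ ≤ 0 := by
    rw [A.inner_sub_hyperplaneProj]
    exact div_nonpos_of_nonpos_of_nonneg hz (A.norm_a_sq_pos i).le
  rw [dist_eq_norm, dist_eq_norm, dist_eq_norm, show x - z = (x - q) - (z - q) by abel,
    norm_sub_sq_real (x - q)]
  linarith

theorem infDist_hyperplane (i : ι) (x : EuclideanSpace ℝ (Fin n)) :
    infDist x (A.hyperplane i) = dist x (A.hyperplaneProj i x) := by
  have hq : A.hyperplaneProj i x ∈ A.hyperplane i := A.val_hyperplaneProj i x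
  refine le_antisymm (infDist_le_dist_of_mem hq) ((le_infDist ⟨_, hq⟩).2 fun z (hz : _ = 0) => ?_)
  have h := A.dist_hyperplaneProj_sq_add_le (i := i) (x := x) (z := z) (by rw [hz, mul_zero])
  nlinarith [dist_nonneg (x := x) (y := z), dist_nonneg (x := x) (y := A.hyperplaneProj i x),
    sq_nonneg (dist z (A.hyperplaneProj i x))]

theorem exists_val_ne_zero (i : ι) : ∃ x, A.val i x ≠ 0 := by
  refine ⟨A.hyperplaneProj i 0 + (1 : ℝ) • A.a i, ?_⟩
  rw [A.val_add_smul, A.val_hyperplaneProj, zero_add, one_mul, real_inner_self_eq_norm_sq]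
  exact (A.norm_a_sq_pos i).ne'

theorem hyperplane_injective : Function.Injective A.hyperplane := by
  intro i j h
  apply A.inj
  ext x
  simpa [hyperplane, val, sub_eq_zero] using Set.ext_iff.1 h x

theorem val_eq_mul_val_of_hyperplane_subset {i j : ι} (h : A.hyperplane i ⊆ A.hyperplane j)
    (x : EuclideanSpace ℝ (Fin n)) :
    A.val j x = ⟪A.a j, A.a i⟫_ℝ / ‖A.a i‖ ^ 2 * A.val i x := by
  have hx : x = A.hyperplaneProj i x + (A.val i x / ‖A.a i‖ ^ 2) • A.a i := by
    rw [hyperplaneProj, sub_add_cancel]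
  conv_lhs => rw [hx]
  rw [A.val_add_smul, h (A.val_hyperplaneProj i x)]
  ring

theorem eq_of_hyperplane_subset {i j : ι} (h : A.hyperplane i ⊆ A.hyperplane j) : i = j := by
  obtain ⟨x, hx⟩ := A.exists_val_ne_zero j
  have hc : ⟪A.a j, A.a i⟫_ℝ / ‖A.a i‖ ^ 2 ≠ 0 := by
    intro hc
    rw [A.val_eq_mul_val_of_hyperplane_subset h, hc, zero_mul] at hx
    exact hx rfl
  refine A.hyperplane_injective (h.antisymm fun z (hz : A.val j z = 0) => ?_)
  rw [A.val_eq_mul_val_of_hyperplane_subset h] at hz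
  exact (mul_eq_zero.1 hz).resolve_left hc

theorem isFlat_univ : A.IsFlat univ :=
  ⟨univ_nonempty, ∅, by simp⟩

theorem isFlat_hyperplane (i : ι) : A.IsFlat (A.hyperplane i) :=
  ⟨⟨_, A.val_hyperplaneProj i 0⟩, {i}, by simp⟩

section Generic

variable {A} {x : EuclideanSpace ℝ (Fin n)}

theorem val_ne_zero_of_infDist_ne
    (hgen : ∀ L L', A.IsFlat L → A.IsFlat L' → L ≠ L' → infDist x L ≠ infDist x L') (i : ι) :
    A.val i x ≠ 0 := by
  intro hx
  refine hgen univ (A.hyperplane i) A.isFlat_univ (A.isFlat_hyperplane i) (fun h => ?_) ?_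
  · obtain ⟨z, hz⟩ := A.exists_val_ne_zero i
    exact hz (h ▸ mem_univ z : z ∈ A.hyperplane i)
  · rw [infDist_zero_of_mem (mem_univ x), infDist_zero_of_mem (show x ∈ A.hyperplane i from hx)]

/-- Otherwise `H_i` and the flat `H_i ∩ H_j` would be at the same distance from `x`. -/
theorem val_hyperplaneProj_ne_zero_of_infDist_ne
    (hgen : ∀ L L', A.IsFlat L → A.IsFlat L' → L ≠ L' → infDist x L ≠ infDist x L')
    {i j : ι} (hji : j ≠ i) : A.val j (A.hyperplaneProj i x) ≠ 0 := by
  intro hq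
  have hqi := A.val_hyperplaneProj i x
  have hflat : A.IsFlat (A.hyperplane i ∩ A.hyperplane j) :=
    ⟨⟨_, hqi, hq⟩, {i, j}, by rw [biInter_pair]⟩
  refine hgen _ _ (A.isFlat_hyperplane i) hflat (fun h => ?_) ?_
  · exact hji (A.eq_of_hyperplane_subset (by rw [h]; exact inter_subset_right)).symm
  · refine le_antisymm (infDist_le_infDist_of_subset inter_subset_left ⟨_, hqi, hq⟩) ?_
    rw [A.infDist_hyperplane]
    exact infDist_le_dist_of_mem ⟨hqi, hq⟩

end Generic

theorem eq_hyperplaneProj_of_isMinOn_dist {x y p : EuclideanSpace ℝ (Fin n)} {i : ι}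
    (hy : ∀ i, A.val i y ≠ 0) (hp : p ∈ closure (A.openCell (A.signAt y)))
    (hmin : IsMinOn (dist x) (closure (A.openCell (A.signAt y))) p)
    (hpi : A.val i p = 0) (hpj : ∀ j, j ≠ i → A.val j p ≠ 0) : p = A.hyperplaneProj i x := by
  set q := A.hyperplaneProj i x
  have hmove : ⟪x - p, q - p⟫_ℝ ≤ 0 := by
    refine A.inner_sub_nonpos_of_isMinOn_dist_chamber hy hp hmin fun j hj => ?_
    obtain rfl : j = i := by_contra fun hji => hpj j hji hj
    rw [A.inner_sub_eq_val_sub, A.val_hyperplaneProj, hpi, sub_zero, mul_zero]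
  have hperp : ⟪x - q, q - p⟫_ℝ = 0 := by
    rw [← neg_sub p q, inner_neg_right, A.inner_sub_hyperplaneProj, hpi, mul_zero, zero_div,
      neg_zero]
  have hsplit : ⟪x - p, q - p⟫_ℝ = ⟪q - p, q - p⟫_ℝ := by
    rw [show x - p = (x - q) + (q - p) by abel, inner_add_left, hperp, zero_add]
  exact (sub_eq_zero.1 (real_inner_self_nonpos.1 (hsplit ▸ hmove))).symm

theorem val_mul_val_neg_of_isMinOn_dist {x y : EuclideanSpace ℝ (Fin n)} {i : ι}
    (hx : A.val i x ≠ 0) (hy : ∀ i, A.val i y ≠ 0)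
    (hq : A.hyperplaneProj i x ∈ closure (A.openCell (A.signAt y)))
    (hmin : IsMinOn (dist x) (closure (A.openCell (A.signAt y))) (A.hyperplaneProj i x))
    (hqj : ∀ j, j ≠ i → A.val j (A.hyperplaneProj i x) ≠ 0) : A.val i y * A.val i x < 0 := by
  by_contra! hside
  have h := A.inner_sub_nonpos_of_isMinOn_dist_chamber (v := x - A.hyperplaneProj i x) hy hq hmin
    fun j hj => by
      obtain rfl : j = i := by_contra fun hji => hqj j hji hj
      rwa [A.inner_sub_eq_val_sub, A.val_hyperplaneProj, sub_zero]
  rw [real_inner_self_nonpos, sub_eq_zero] at h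
  exact hx (h ▸ A.val_hyperplaneProj i x)

theorem exists_chamber_opposite_hyperplaneProj {x : EuclideanSpace ℝ (Fin n)} {i : ι}
    (hx : A.val i x ≠ 0) (hqj : ∀ j, j ≠ i → A.val j (A.hyperplaneProj i x) ≠ 0) :
    ∃ y, (∀ j, A.val j y ≠ 0) ∧ A.hyperplaneProj i x ∈ closure (A.openCell (A.signAt y)) ∧
      A.val i y * A.val i x < 0 := by
  set q := A.hyperplaneProj i x
  have hqi : A.val i q = 0 := A.val_hyperplaneProj i x
  have hlim : Tendsto (fun t : ℝ => q + t • (q - x)) (𝓝[>] 0) (𝓝 q) := by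
    have h : Continuous fun t : ℝ => q + t • (q - x) := by fun_prop
    simpa using (h.tendsto 0).mono_left nhdsWithin_le_nhds
  obtain ⟨t, hsign, ht : 0 < t⟩ :=
    ((hlim.eventually (A.eventually_sign_val_eq q)).and self_mem_nhdsWithin).exists
  set y := q + t • (q - x)
  have hyi : A.val i y = -(t * A.val i x) := by
    rw [A.val_add_smul, A.inner_sub_eq_val_sub, hqi]
    ring
  have hside : A.val i y * A.val i x < 0 := by
    rw [hyi, neg_mul, neg_lt_zero, mul_assoc]
    exact mul_pos ht (mul_self_pos.2 hx)
  have hyj : ∀ j, j ≠ i → SignType.sign (A.val j y) = SignType.sign (A.val j q) :=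
    fun j hj => hsign j (hqj j hj)
  have hy : ∀ j, A.val j y ≠ 0 := by
    intro j
    by_cases hj : j = i
    · subst hj
      exact left_ne_zero_of_mul hside.ne
    · rw [← sign_ne_zero, hyj j hj, sign_ne_zero]
      exact hqj j hj
  refine ⟨y, hy, A.mem_closure_openCell_of_mul_nonneg hy fun j => ?_, hside⟩
  by_cases hj : j = i
  · rw [hj, hqi, mul_zero]
  · exact mul_nonneg_of_sign_eq (hyj j hj)

theorem signAt_eq_of_hyperplaneProj_mem {x y y' : EuclideanSpace ℝ (Fin n)} {i : ι}
    (hy : ∀ i, A.val i y ≠ 0) (hy' : ∀ i, A.val i y' ≠ 0)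
    (hq : A.hyperplaneProj i x ∈ closure (A.openCell (A.signAt y)))
    (hq' : A.hyperplaneProj i x ∈ closure (A.openCell (A.signAt y')))
    (hside : A.val i y * A.val i x < 0) (hside' : A.val i y' * A.val i x < 0)
    (hqj : ∀ j, j ≠ i → A.val j (A.hyperplaneProj i x) ≠ 0) : A.signAt y = A.signAt y' := by
  refine A.signAt_eq_of_mem_closure_openCell hy hy' hq hq' fun j hj => ?_
  obtain rfl : j = i := by_contra fun hji => hqj j hji hj
  have hpos {z} (h : A.val j z * A.val j x < 0) : 0 < A.val j z * -A.val j x := by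
    rwa [mul_neg, neg_pos]
  exact (sign_eq_sign_of_mul_pos (hpos hside)).trans (sign_eq_sign_of_mul_pos (hpos hside')).symm

/-- The foot `q` is nearest to `x` in the whole closed half-space beyond `H_i`. -/
theorem eq_hyperplaneProj_of_val_mul_val_neg {x y p : EuclideanSpace ℝ (Fin n)} {i : ι}
    (hq : A.hyperplaneProj i x ∈ closure (A.openCell (A.signAt y)))
    (hside : A.val i y * A.val i x < 0) (hp : p ∈ closure (A.openCell (A.signAt y)))
    (hmin : IsMinOn (dist x) (closure (A.openCell (A.signAt y))) p) :
    p = A.hyperplaneProj i x := by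
  have hyp := A.mul_nonneg_of_mem_closure_openCell hp i
  have hxp : A.val i x * A.val i p ≤ 0 := by
    nlinarith [mul_self_pos.2 (left_ne_zero_of_mul hside.ne)]
  have h := A.dist_hyperplaneProj_sq_add_le hxp
  have hle := isMinOn_iff.1 hmin _ hq
  refine dist_le_zero.1 ?_
  nlinarith [dist_nonneg (x := x) (y := p), dist_nonneg (x := p) (y := A.hyperplaneProj i x)]

end Arrangement

/-- For a generic point `x₀`: there is exactly one chamber whose projection of `x₀` lies on
no hyperplane (namely the chamber containing `x₀`), and for every hyperplane `H` there is
exactly one chamber whose projection of `x₀` lies on `H` and on no other hyperplane. -/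
theorem stmt18 {n : ℕ} {ι : Type} (A : Arrangement n ι)
    (x₀ : EuclideanSpace ℝ (Fin n))
    (hgen : ∀ L L', A.IsFlat L → A.IsFlat L' → L ≠ L' → infDist x₀ L ≠ infDist x₀ L')
    (proj : Set (EuclideanSpace ℝ (Fin n)) → EuclideanSpace ℝ (Fin n))
    (hproj : ∀ C, A.IsChamber C → proj C ∈ C ∧ ∀ q ∈ C, dist x₀ (proj C) ≤ dist x₀ q) :
    (∃! C, A.IsChamber C ∧ ∀ i, proj C ∉ A.hyperplane i) ∧
    (∀ C, A.IsChamber C → x₀ ∈ C → ∀ i, proj C ∉ A.hyperplane i) ∧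
    (∀ i, ∃! C, A.IsChamber C ∧ proj C ∈ A.hyperplane i ∧
      ∀ j, j ≠ i → proj C ∉ A.hyperplane j) := by
  have hx₀ := Arrangement.val_ne_zero_of_infDist_ne hgen
  have hmin C (hC : A.IsChamber C) : IsMinOn (dist x₀) C (proj C) := isMinOn_iff.2 (hproj C hC).2
  have hcontains : ∀ C, A.IsChamber C → x₀ ∈ C → ∀ i, proj C ∉ A.hyperplane i := by
    intro C hC hxC i
    rw [← dist_le_zero.1 (((hproj C hC).2 x₀ hxC).trans_eq (dist_self x₀))]
    exact hx₀ i
  have hC₀ : A.IsChamber (closure (A.openCell (A.signAt x₀))) := ⟨x₀, hx₀, rfl⟩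
  have hx₀C₀ : x₀ ∈ closure (A.openCell (A.signAt x₀)) := subset_closure fun _ => rfl
  refine ⟨⟨_, ⟨hC₀, hcontains _ hC₀ hx₀C₀⟩, ?_⟩, hcontains, fun i => ?_⟩
  · rintro C ⟨hC, hoff⟩
    obtain ⟨y, hy, rfl⟩ := id hC
    have hpx := A.eq_of_isMinOn_dist_of_forall_val_ne_zero hy (hproj _ hC).1 (hmin _ hC) hoff
    rw [A.signAt_eq_of_mem_closure_openCell hy hx₀ (hpx ▸ (hproj _ hC).1) hx₀C₀
      fun i h => absurd h (hx₀ i)]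
  have hqj j (hj : j ≠ i) := Arrangement.val_hyperplaneProj_ne_zero_of_infDist_ne hgen hj
  obtain ⟨y, hy, hqC, hside⟩ := A.exists_chamber_opposite_hyperplaneProj (hx₀ i) hqj
  have hC : A.IsChamber (closure (A.openCell (A.signAt y))) := ⟨y, hy, rfl⟩
  have hpq := A.eq_hyperplaneProj_of_val_mul_val_neg hqC hside (hproj _ hC).1 (hmin _ hC)
  refine ⟨_, ⟨hC, hpq ▸ A.val_hyperplaneProj i x₀, fun j hj => hpq ▸ hqj j hj⟩, ?_⟩
  rintro C' ⟨hC', hpi, hpj⟩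
  obtain ⟨y', hy', rfl⟩ := id hC'
  have hpq' := A.eq_hyperplaneProj_of_isMinOn_dist hy' (hproj _ hC').1 (hmin _ hC') hpi hpj
  have hqC' : A.hyperplaneProj i x₀ ∈ closure (A.openCell (A.signAt y')) := hpq' ▸ (hproj _ hC').1
  have hside' := A.val_mul_val_neg_of_isMinOn_dist (hx₀ i) hy' hqC' (hpq' ▸ hmin _ hC') hqj
  rw [A.signAt_eq_of_hyperplaneProj_mem hy' hy hqC' hqC hside' hside hqj]
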